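/- arXiv:2510.14477 — 2 statements merged into one kernel-verified Lean document; each statement's English description precedes it below -/
import Mathlib

section
/- Let R be a semisimple ring and M a right R-module. Then M is endoartinian if and only if M is a noetherian R-module. -/
/-!
In a module whose submodule lattice is complemented, every submodule is the image of a
projection, so descending chains of images of endomorphisms are exactly descending chains of
submodules: such a module is endoartinian iff it is artinian. Over a semisimple ring every
module is semisimple, and a semisimple module is artinian iff it is noetherian.
-/

/-- A module `M` over a ring `S` is *endoartinian* if every descending chain of images of
module endomorphisms of `M` stabilizes.  (A right `R`-module is treated as a module over
`Rᵐᵒᵖ`.) -/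
def IsEndoartinian (S M : Type*) [Ring S] [AddCommGroup M] [Module S M] : Prop :=
  ∀ f : ℕ → M →ₗ[S] M,
    (∀ n, LinearMap.range (f (n + 1)) ≤ LinearMap.range (f n)) →
    ∃ n, ∀ k, n ≤ k → LinearMap.range (f k) = LinearMap.range (f n)

section

variable {S M : Type*} [Ring S] [AddCommGroup M] [Module S M]

theorem IsEndoartinian.of_isArtinian [IsArtinian S M] : IsEndoartinian S M := by
  intro f hf
  obtain ⟨n, hn⟩ := IsArtinian.monotone_stabilizes
    ⟨fun n ↦ OrderDual.toDual (LinearMap.range (f n)), (antitone_nat_of_succ_le hf).dual_right⟩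
  exact ⟨n, fun k hk ↦ (hn k hk).symm⟩

theorem exists_range_eq_of_complementedLattice [ComplementedLattice (Submodule S M)]
    (N : Submodule S M) : ∃ f : M →ₗ[S] M, LinearMap.range f = N :=
  have ⟨_, hN⟩ := exists_isCompl N
  ⟨N.projection _ hN, Submodule.range_projection hN⟩

theorem IsEndoartinian.isArtinian [ComplementedLattice (Submodule S M)]
    (h : IsEndoartinian S M) : IsArtinian S M := by
  refine monotone_stabilizes_iff_artinian.mp fun N ↦ ?_
  choose f hf using fun n ↦ exists_range_eq_of_complementedLattice (OrderDual.ofDual (N n))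
  obtain ⟨n, hn⟩ := h f fun n ↦ by rw [hf, hf]; exact N.mono n.le_succ
  exact ⟨n, fun k hk ↦ by simpa only [hf, EmbeddingLike.apply_eq_iff_eq, eq_comm] using hn k hk⟩

theorem isEndoartinian_iff_isArtinian [ComplementedLattice (Submodule S M)] :
    IsEndoartinian S M ↔ IsArtinian S M :=
  ⟨IsEndoartinian.isArtinian, fun _ ↦ .of_isArtinian⟩

end

/-- Over a semisimple ring, a module is endoartinian iff it is noetherian. -/
theorem isEndoartinian_iff_isNoetherian_of_semisimpleRing (R M : Type*) [Ring R]
    [AddCommGroup M] [Module Rᵐᵒᵖ M] (hR : IsSemisimpleModule Rᵐᵒᵖ R) :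
    IsEndoartinian Rᵐᵒᵖ M ↔ IsNoetherian Rᵐᵒᵖ M := by
  have : IsSemisimpleRing Rᵐᵒᵖ := .congr (MulOpposite.opLinearEquiv Rᵐᵒᵖ).symm
  rw [isEndoartinian_iff_isArtinian]
  exact (IsSemisimpleModule.finite_tfae.out 1 2).symm
end

section
/- Let R be a ring and M a right R-module that is semisimple and endoartinian. Then M satisfies the dual Schröder–Bernstein property: for any two direct summands A and B of M such that there exist a surjective R-module homomorphism A → B and a surjective R-module homomorphism B → A, the modules A and B are isomorphic as R-modules. -/
namespace IsEndoartinian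

variable {S M : Type*} [Ring S] [AddCommGroup M] [Module S M]

theorem of_isCompl (hM : IsEndoartinian S M) {A L : Submodule S M} (h : IsCompl A L) :
    IsEndoartinian S A := by
  intro f hf
  have hrange (n : ℕ) : LinearMap.range (A.subtype ∘ₗ f n ∘ₗ A.projectionOnto L h) =
      (LinearMap.range (f n)).map A.subtype := by
    rw [LinearMap.range_comp, LinearMap.range_comp_of_range_eq_top _ (A.range_projectionOnto h)]
  obtain ⟨n, hn⟩ := hM (fun n ↦ A.subtype ∘ₗ f n ∘ₗ A.projectionOnto L h) fun n ↦ by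
    simp only [hrange]
    exact Submodule.map_mono (hf n)
  refine ⟨n, fun k hk ↦ Submodule.map_injective_of_injective A.injective_subtype ?_⟩
  simpa only [hrange] using hn k hk

theorem surjective_of_injective (hM : IsEndoartinian S M) {t : Module.End S M}
    (ht : Function.Injective t) : Function.Surjective t := by
  obtain ⟨n, hn⟩ := hM (t ^ ·) fun n ↦ by
    rw [pow_succ, Module.End.mul_eq_comp]
    exact LinearMap.range_comp_le_range _ _
  intro x
  obtain ⟨y, hy⟩ : (t ^ n) x ∈ LinearMap.range (t ^ (n + 1)) := hn (n + 1) n.le_succ ▸ ⟨x, rfl⟩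
  refine ⟨y, Module.End.iterate_injective ht n ?_⟩
  rwa [pow_succ, Module.End.mul_apply] at hy

end IsEndoartinian

theorem semisimple_isEndoartinian_DSB_property_general (R M : Type*) [Ring R] [AddCommGroup M]
    [Module Rᵐᵒᵖ M] (hss : IsSemisimpleModule Rᵐᵒᵖ M) (hM : IsEndoartinian Rᵐᵒᵖ M)
    (A B : Submodule Rᵐᵒᵖ M)
    (hA : ∃ L : Submodule Rᵐᵒᵖ M, A ⊓ L = ⊥ ∧ A ⊔ L = ⊤)
    (f : A →ₗ[Rᵐᵒᵖ] B) (hf : Function.Surjective f)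
    (g : B →ₗ[Rᵐᵒᵖ] A) (hg : Function.Surjective g) :
    Nonempty (A ≃ₗ[Rᵐᵒᵖ] B) := by
  have : IsSemisimpleModule Rᵐᵒᵖ A := hss.submodule Rᵐᵒᵖ M
  have : IsSemisimpleModule Rᵐᵒᵖ B := hss.submodule Rᵐᵒᵖ M
  obtain ⟨i, hfi⟩ := IsSemisimpleModule.lifting_property f hf LinearMap.id
  obtain ⟨j, hgj⟩ := IsSemisimpleModule.lifting_property g hg LinearMap.id
  have hi : Function.Injective i := Function.LeftInverse.injective (g := f) (LinearMap.congr_fun hfi)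
  have hj : Function.Injective j := Function.LeftInverse.injective (g := g) (LinearMap.congr_fun hgj)
  obtain ⟨L, hAL, hAL'⟩ := hA
  have hA : IsEndoartinian Rᵐᵒᵖ A :=
    hM.of_isCompl ⟨disjoint_iff.mpr hAL, codisjoint_iff.mpr hAL'⟩
  have hij : Function.Surjective (i ∘ₗ j) := hA.surjective_of_injective (hi.comp hj)
  exact ⟨(LinearEquiv.ofBijective i ⟨hi, .of_comp hij⟩).symm⟩

/-- A semisimple endoartinian module satisfies the dual Schröder–Bernstein property:
mutually epimorphic direct summands are isomorphic. -/
theorem semisimple_isEndoartinian_DSB_property (R M : Type*) [Ring R] [AddCommGroup M]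
    [Module Rᵐᵒᵖ M] (hss : IsSemisimpleModule Rᵐᵒᵖ M) (hM : IsEndoartinian Rᵐᵒᵖ M)
    (A B : Submodule Rᵐᵒᵖ M)
    (hA : ∃ L : Submodule Rᵐᵒᵖ M, A ⊓ L = ⊥ ∧ A ⊔ L = ⊤)
    (hB : ∃ L : Submodule Rᵐᵒᵖ M, B ⊓ L = ⊥ ∧ B ⊔ L = ⊤)
    (f : A →ₗ[Rᵐᵒᵖ] B) (hf : Function.Surjective f)
    (g : B →ₗ[Rᵐᵒᵖ] A) (hg : Function.Surjective g) :
    Nonempty (A ≃ₗ[Rᵐᵒᵖ] B) :=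
  semisimple_isEndoartinian_DSB_property_general R M hss hM A B hA f hf g hg
end
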